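/- arXiv:2207.07544 — 3 statements merged into one kernel-verified Lean document; each statement's English description precedes it below -/
import Mathlib

section
/- Let P2 be a stochastic kernel on W given W×A and Q2 a stochastic kernel on Y given A×W, and define the stochastic kernel P on W×Y given W×A by P(B×C|w,a) := ∫_B Q2(C|a,w') P2(dw'|w,a) for Borel B ⊆ W and C ⊆ Y. If P2 is weakly continuous and Q2 is continuous in total variation, then P is semi-uniform Feller. -/
open MeasureTheory ProbabilityTheory Filter Topology

/-- A stochastic kernel `Ψ` on `X × Y` given `T` is *semi-uniform Feller* if for every
sequence `t n → t` in `T` and every bounded continuous `f : X → ℝ`,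
`sup_{B ∈ B(Y)} |∫ f dΨ(·, B | t n) − ∫ f dΨ(·, B | t)| → 0`, where `Ψ(A, B | t) = Ψ(A × B | t)`. -/
def SemiUniformFeller {X Y T : Type*} [TopologicalSpace X] [MeasurableSpace X]
    [MeasurableSpace Y] [TopologicalSpace T] [MeasurableSpace T]
    (Ψ : Kernel T (X × Y)) : Prop :=
  ∀ (s : ℕ → T) (t : T), Tendsto s atTop (𝓝 t) → ∀ f : BoundedContinuousFunction X ℝ,
    Tendsto (fun n => ⨆ B : {B : Set Y // MeasurableSet B},
      |(∫ x in Set.univ ×ˢ B.1, f x.1 ∂(Ψ (s n))) - ∫ x in Set.univ ×ˢ B.1, f x.1 ∂(Ψ t)|)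
      atTop (𝓝 0)

/-!
Write `s n = (w_n, a_n) → t = (w, a)`. By the product formula for `P`, the quantity in
`SemiUniformFeller P` is `∫ g_n^B dP₂(· | s n) - ∫ g^B dP₂(· | t)` with
`g_n^B(w') = f(w') Q₂(B | a_n, w')` and `g^B(w') = f(w') Q₂(B | a, w')`. Total-variation continuity
of `Q₂` makes `g_n^B(w') → g^B(x)` as `n → ∞` and `w' → x`, uniformly in `B`. For such a family,
weak convergence of the measures already gives convergence of the integrals uniformly in `B`:
choose a finite partition of unity `ρ_x` subordinate to balls on which the family oscillates little
and carrying almost all the limit mass; each `g_n^B` and `g^B` is then uniformly close to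
`∑ₓ g^B(x) ρ_x` except on a set of small mass, and only the finitely many integrals `∫ ρ_x` have
to converge.
-/

open scoped BoundedContinuousFunction ENNReal

section

variable {α ι : Type*} {F : α → ι → ℝ} {G : ι → ℝ} {l : Filter α}

theorem tendsto_iSup_abs_sub_of_tendstoUniformly (h : TendstoUniformly F G l) :
    Tendsto (fun a => ⨆ i, |F a i - G i|) l (𝓝 0) := by
  rw [Metric.tendsto_nhds]
  intro ε hε
  filter_upwards [Metric.tendstoUniformly_iff.mp h (ε / 2) (half_pos hε)] with a ha
  have hsup : ⨆ i, |F a i - G i| ≤ ε / 2 :=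
    Real.iSup_le (fun i => by rw [← Real.dist_eq, dist_comm]; exact (ha i).le) (by positivity)
  rw [Real.dist_0_eq_abs, abs_of_nonneg (Real.iSup_nonneg fun i => abs_nonneg _)]
  linarith

theorem tendstoUniformly_of_tendsto_iSup_abs_sub
    (hF : ∀ a, BddAbove (Set.range fun i => |F a i - G i|))
    (h : Tendsto (fun a => ⨆ i, |F a i - G i|) l (𝓝 0)) : TendstoUniformly F G l := by
  rw [Metric.tendstoUniformly_iff]
  intro ε hε
  filter_upwards [h.eventually_lt_const hε] with a ha i
  rw [dist_comm, Real.dist_eq]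
  exact (le_ciSup (hF a) i).trans_lt ha

end

theorem TendstoUniformly.comp_tendsto {α β γ ι : Type*} [UniformSpace β] {F : ι → α → β}
    {f : α → β} {p : Filter ι} {q : Filter γ} (h : TendstoUniformly F f p) {u : γ → ι}
    (hu : Tendsto u q p) : TendstoUniformly (fun c => F (u c)) f q := by
  rw [tendstoUniformly_iff_tendsto] at h ⊢
  exact h.comp ((hu.comp tendsto_fst).prodMk tendsto_snd)

theorem TendstoUniformly.mul_of_abs_le {α ι : Type*} {F : α → ι → ℝ} {G : ι → ℝ} {l : Filter α}
    {c : α → ℝ} {c₀ K : ℝ} (hc : Tendsto c l (𝓝 c₀)) (hF : TendstoUniformly F G l)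
    (hG : ∀ i, |G i| ≤ K) :
    TendstoUniformly (fun a i => c a * F a i) (fun i => c₀ * G i) l := by
  rw [Metric.tendstoUniformly_iff] at hF ⊢
  intro ε hε
  set η := ε / (|c₀| + |K| + 2)
  have hη : 0 < η := by positivity
  have hηε : η * (|c₀| + |K| + 2) = ε := div_mul_cancel₀ _ (by positivity)
  filter_upwards [hF η hη, Metric.tendsto_nhds.mp hc (min η 1) (by positivity)] with a hFa hca i
  rw [Real.dist_eq] at hca
  have hFai : |F a i - G i| < η := by rw [← Real.dist_eq, dist_comm]; exact hFa i
  have hca_bd : |c a| ≤ |c₀| + 1 := by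
    have := abs_sub_abs_le_abs_sub (c a) c₀
    linarith [min_le_right η 1]
  rw [dist_comm, Real.dist_eq]
  calc |c a * F a i - c₀ * G i| = |c a * (F a i - G i) + (c a - c₀) * G i| := by ring_nf
    _ ≤ |c a| * |F a i - G i| + |c a - c₀| * |G i| := by
        rw [← abs_mul, ← abs_mul]; exact abs_add_le _ _
    _ ≤ (|c₀| + 1) * η + η * |K| := by
        gcongr ?_ * ?_ + ?_ * ?_
        · exact (hca.trans_le (min_le_left _ _)).le
        · exact (hG i).trans (le_abs_self K)
    _ < ε := by nlinarith

theorem tendstoUniformly_sum_mul {ι κ : Type*} [Fintype κ] {a : ℕ → κ → ℝ} {a₀ : κ → ℝ}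
    (ha : ∀ k, Tendsto (fun n => a n k) atTop (𝓝 (a₀ k))) {c : ι → κ → ℝ} {M : ℝ}
    (hc : ∀ i k, |c i k| ≤ M) :
    TendstoUniformly (fun n i => ∑ k, c i k * a n k) (fun i => ∑ k, c i k * a₀ k) atTop := by
  have hE : Tendsto (fun n => |M| * ∑ k, |a n k - a₀ k|) atTop (𝓝 0) := by
    simpa using (tendsto_finsetSum _ fun k _ => ((ha k).sub_const (a₀ k)).abs).const_mul |M|
  rw [Metric.tendstoUniformly_iff]
  intro ε hε
  filter_upwards [hE.eventually_lt_const hε] with n hn i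
  rw [dist_comm, Real.dist_eq, ← Finset.sum_sub_distrib]
  calc |∑ k, (c i k * a n k - c i k * a₀ k)| ≤ ∑ k, |c i k * a n k - c i k * a₀ k| :=
        Finset.abs_sum_le_sum_abs _ _
    _ ≤ ∑ k, |M| * |a n k - a₀ k| := by
        gcongr with k
        rw [← mul_sub, abs_mul]
        exact mul_le_mul_of_nonneg_right ((hc i k).trans (le_abs_self M)) (abs_nonneg _)
    _ < ε := by rwa [← Finset.mul_sum]

theorem ProbabilityTheory.Kernel.tendstoUniformly_nhds_of_tendsto_iSup {T Y : Type*}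
    [TopologicalSpace T] [FirstCountableTopology T] [MeasurableSpace T] [MeasurableSpace Y]
    (κ : Kernel T Y) [IsFiniteKernel κ] {t₀ : T}
    (hκ : ∀ p : ℕ → T, Tendsto p atTop (𝓝 t₀) →
      Tendsto (fun n => ⨆ C : {C : Set Y // MeasurableSet C},
        |(κ (p n) C.1).toReal - (κ t₀ C.1).toReal|) atTop (𝓝 0)) :
    TendstoUniformly (fun t (C : {C : Set Y // MeasurableSet C}) => (κ t C.1).toReal)
      (fun C => (κ t₀ C.1).toReal) (𝓝 t₀) := by
  have hle : ∀ t C, (κ t C).toReal ≤ κ.bound.toReal := fun t C =>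
    ENNReal.toReal_mono κ.bound_ne_top (κ.measure_le_bound t C)
  refine tendstoUniformly_iff_seq_tendstoUniformly.mpr fun p hp =>
    tendstoUniformly_of_tendsto_iSup_abs_sub (fun n => ⟨κ.bound.toReal, ?_⟩) (hκ p hp)
  rintro _ ⟨C, rfl⟩
  rw [abs_sub_le_iff]
  constructor <;> linarith [hle (p n) C.1, hle t₀ C.1, (κ (p n) C.1).toReal_nonneg,
    (κ t₀ C.1).toReal_nonneg]

theorem tendsto_of_tendstoUniformly_atTop_prod_nhds {X ι β : Type*} [TopologicalSpace X]
    [UniformSpace β] {g : ℕ → ι → X → β} {h : ι → X → β} {x : X}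
    (hg : TendstoUniformly (fun (p : ℕ × X) i => g p.1 i p.2) (fun i => h i x) (atTop ×ˢ 𝓝 x))
    (i : ι) : Tendsto (fun n => g n i x) atTop (𝓝 (h i x)) :=
  (hg.comp_tendsto (tendsto_id.prodMk tendsto_const_nhds)).tendsto_at i

theorem exists_ball_abs_sub_lt_of_tendstoUniformly_atTop_prod_nhds {X ι : Type*}
    [PseudoMetricSpace X] {g : ℕ → ι → X → ℝ} {h : ι → X → ℝ}
    (hg : ∀ x, TendstoUniformly (fun (p : ℕ × X) i => g p.1 i p.2) (fun i => h i x)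
      (atTop ×ˢ 𝓝 x))
    (x : X) {η : ℝ} (hη : 0 < η) :
    ∃ r > 0, ∃ N, ∀ w ∈ Metric.ball x r, ∀ i,
      (∀ n ≥ N, |g n i w - h i x| < η) ∧ |h i w - h i x| ≤ η := by
  obtain ⟨⟨N, r⟩, ⟨-, hr⟩, hNr⟩ :=
    (atTop_basis.prod Metric.nhds_basis_ball).eventually_iff.mp
      (Metric.tendstoUniformly_iff.mp (hg x) η hη)
  have hnear : ∀ n ≥ N, ∀ w ∈ Metric.ball x r, ∀ i, |g n i w - h i x| < η :=
    fun n hn w hw i => by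
      rw [← Real.dist_eq, dist_comm]; exact hNr (Set.mk_mem_prod hn hw) i
  refine ⟨r, hr, N, fun w hw i => ⟨fun n hn => hnear n hn w hw i, ?_⟩⟩
  exact le_of_tendsto (((tendsto_of_tendstoUniformly_atTop_prod_nhds (hg w) i).sub_const
    (h i x)).abs) (eventually_atTop.mpr ⟨N, fun n hn => (hnear n hn w hw i).le⟩)

theorem exists_finset_measure_compl_iUnion_ball_lt {X : Type*} [PseudoMetricSpace X]
    [TopologicalSpace.SeparableSpace X] [MeasurableSpace X] [OpensMeasurableSpace X]
    (μ : Measure X) [IsFiniteMeasure μ] {r : X → ℝ} (hr : ∀ x, 0 < r x) {ε : ℝ≥0∞}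
    (hε : 0 < ε) : ∃ s : Finset X, μ (⋃ x ∈ s, Metric.ball x (r x))ᶜ < ε := by
  have := UniformSpace.secondCountable_of_separable X
  obtain ⟨c, hc, hcov⟩ :=
    TopologicalSpace.countable_cover_nhds fun x => Metric.ball_mem_nhds x (hr x)
  have := hc.to_subtype
  set U : Finset c → Set X := fun t => (⋃ x ∈ t, Metric.ball x.1 (r x))ᶜ
  have hU_anti : Antitone U := fun t t' htt' => Set.compl_subset_compl.mpr <|
    Set.biUnion_subset_biUnion_left htt'
  have hU_empty : ⋂ t, U t = ∅ := by
    simp only [U, ← Set.compl_iUnion, Set.compl_empty_iff]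
    rw [Set.eq_univ_iff_forall]
    intro w
    obtain ⟨x, hxc, hwx⟩ := Set.mem_iUnion₂.mp (hcov ▸ Set.mem_univ w)
    exact Set.mem_iUnion.mpr ⟨{⟨x, hxc⟩}, by simpa using hwx⟩
  have hlim := tendsto_measure_iInter_atTop (μ := μ) (s := U)
    (fun t => (isOpen_biUnion fun x _ => Metric.isOpen_ball).isClosed_compl.nullMeasurableSet)
    hU_anti ⟨∅, measure_ne_top _ _⟩
  rw [hU_empty, measure_empty] at hlim
  obtain ⟨t, ht⟩ := (hlim.eventually_lt_const hε).exists
  classical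
  refine ⟨t.image Subtype.val, ?_⟩
  simpa [Finset.set_biUnion_finset_image, U] using ht

namespace PartitionOfUnity

variable {ι X : Type*} [TopologicalSpace X] {K : Set X}

theorem integrable [MeasurableSpace X] [OpensMeasurableSpace X] (ρ : PartitionOfUnity ι X K)
    (μ : Measure X) [IsFiniteMeasure μ] (i : ι) : Integrable (ρ i) μ :=
  (integrable_const 1).mono' (ρ i).continuous.aestronglyMeasurable <| .of_forall fun w => by
    rw [Real.norm_eq_abs, abs_of_nonneg (ρ.nonneg i w)]; exact ρ.le_one i w

variable [Fintype ι]

theorem abs_sub_sum_mul_le (ρ : PartitionOfUnity ι X K) {F : X → ℝ} {c : ι → ℝ} {M ε : ℝ}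
    (hF : ∀ w, |F w| ≤ M) (hε : 0 ≤ ε) (hc : ∀ i w, ρ i w ≠ 0 → |F w - c i| ≤ ε) (w : X) :
    |F w - ∑ i, c i * ρ i w| ≤ M * (1 - ∑ i, ρ i w) + ε := by
  have hsum_le : ∑ i, ρ i w ≤ 1 := by simpa [finsum_eq_sum_of_fintype] using ρ.sum_le_one w
  have hterm : ∀ i, |(F w - c i) * ρ i w| ≤ ε * ρ i w := fun i => by
    rw [abs_mul, abs_of_nonneg (ρ.nonneg i w)]
    by_cases hi : ρ i w = 0
    · simp [hi]
    · exact mul_le_mul_of_nonneg_right (hc i w hi) (ρ.nonneg i w)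
  calc |F w - ∑ i, c i * ρ i w| = |F w * (1 - ∑ i, ρ i w) + ∑ i, (F w - c i) * ρ i w| := by
        simp only [sub_mul, Finset.sum_sub_distrib, ← Finset.mul_sum]; ring_nf
    _ ≤ |F w * (1 - ∑ i, ρ i w)| + ∑ i, |(F w - c i) * ρ i w| :=
        (abs_add_le _ _).trans (add_le_add_right (Finset.abs_sum_le_sum_abs _ _) _)
    _ ≤ M * (1 - ∑ i, ρ i w) + ∑ i, ε * ρ i w := by
        have h1 : 0 ≤ 1 - ∑ i, ρ i w := sub_nonneg.mpr hsum_le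
        rw [abs_mul, abs_of_nonneg h1]
        exact add_le_add (mul_le_mul_of_nonneg_right (hF w) h1)
          (Finset.sum_le_sum fun i _ => hterm i)
    _ ≤ M * (1 - ∑ i, ρ i w) + ε := by
        rw [← Finset.mul_sum]; linarith [mul_le_of_le_one_right hε hsum_le]

theorem abs_integral_sub_sum_mul_integral_le [MeasurableSpace X] [OpensMeasurableSpace X]
    (ρ : PartitionOfUnity ι X K) (μ : Measure X) [IsProbabilityMeasure μ] {F : X → ℝ}
    {c : ι → ℝ} {M ε : ℝ} (hFm : AEStronglyMeasurable F μ) (hF : ∀ w, |F w| ≤ M) (hε : 0 ≤ ε)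
    (hc : ∀ i w, ρ i w ≠ 0 → |F w - c i| ≤ ε) :
    |∫ w, F w ∂μ - ∑ i, c i * ∫ w, ρ i w ∂μ| ≤ M * (1 - ∑ i, ∫ w, ρ i w ∂μ) + ε := by
  have hFi : Integrable F μ := (integrable_const M).mono' hFm (.of_forall hF)
  have hρi := ρ.integrable μ
  have hΦi : Integrable (fun w => ∑ i, ρ i w) μ := integrable_finsetSum _ fun i _ => hρi i
  have hΦi' : Integrable (fun w => M * (1 - ∑ i, ρ i w)) μ :=
    ((integrable_const 1).sub hΦi).const_mul M
  have hcomb : ∑ i, c i * ∫ w, ρ i w ∂μ = ∫ w, ∑ i, c i * ρ i w ∂μ := by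
    rw [integral_finsetSum _ fun i _ => (hρi i).const_mul (c i)]
    simp_rw [integral_const_mul]
  have hΦ : ∑ i, ∫ w, ρ i w ∂μ = ∫ w, ∑ i, ρ i w ∂μ := (integral_finsetSum _ fun i _ => hρi i).symm
  rw [hcomb, hΦ, ← integral_sub hFi (integrable_finsetSum _ fun i _ => (hρi i).const_mul _)]
  calc |∫ w, (F w - ∑ i, c i * ρ i w) ∂μ| ≤ ∫ w, |F w - ∑ i, c i * ρ i w| ∂μ :=
        abs_integral_le_integral_abs
    _ ≤ ∫ w, (M * (1 - ∑ i, ρ i w) + ε) ∂μ :=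
        integral_mono_of_nonneg (.of_forall fun w => abs_nonneg _)
          (hΦi'.add (integrable_const ε))
          (.of_forall (ρ.abs_sub_sum_mul_le hF hε hc))
    _ = M * (1 - ∫ w, ∑ i, ρ i w ∂μ) + ε := by
        rw [integral_add hΦi' (integrable_const ε),
          integral_const_mul, integral_sub (integrable_const 1) hΦi]
        simp

end PartitionOfUnity

theorem exists_partitionOfUnity_isSubordinate_ball_one_sub_lt {X : Type*} [MetricSpace X]
    [TopologicalSpace.SeparableSpace X] [MeasurableSpace X] [OpensMeasurableSpace X]
    (μ : Measure X) [IsProbabilityMeasure μ] {r : X → ℝ} (hr : ∀ x, 0 < r x) {ε : ℝ}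
    (hε : 0 < ε) :
    ∃ (s : Finset X) (K : Set X) (ρ : PartitionOfUnity s X K),
      ρ.IsSubordinate (fun x => Metric.ball x.1 (r x)) ∧ 1 - ε < ∑ x, ∫ w, ρ x w ∂μ := by
  obtain ⟨s, hs⟩ := exists_finset_measure_compl_iUnion_ball_lt μ (fun x => half_pos (hr x))
    (ENNReal.ofReal_pos.mpr hε)
  set K := ⋃ x ∈ s, Metric.closedBall x (r x / 2)
  have hK : IsClosed K := isClosed_biUnion_finset fun x _ => Metric.isClosed_closedBall
  have hKU : K ⊆ ⋃ x : s, Metric.ball x.1 (r x) := by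
    intro w hw
    obtain ⟨x, hx, hwx⟩ := Set.mem_iUnion₂.mp hw
    exact Set.mem_iUnion.mpr ⟨⟨x, hx⟩, Metric.closedBall_subset_ball (half_lt_self (hr x)) hwx⟩
  obtain ⟨ρ, hρ⟩ := PartitionOfUnity.exists_isSubordinate hK _ (fun _ => Metric.isOpen_ball) hKU
  refine ⟨s, K, ρ, hρ, ?_⟩
  have hKc : μ.real Kᶜ < ε := ENNReal.toReal_lt_of_lt_ofReal <|
    (measure_mono (Set.compl_subset_compl.mpr (Set.iUnion₂_mono fun x _ =>
      Metric.ball_subset_closedBall))).trans_lt hs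
  have hind : ∀ w, K.indicator 1 w ≤ ∑ x, ρ x w := fun w => by
    by_cases hw : w ∈ K
    · rw [Set.indicator_of_mem hw, ← finsum_eq_sum_of_fintype, ρ.sum_eq_one hw]; rfl
    · simpa [hw] using Finset.sum_nonneg fun x _ => ρ.nonneg x w
  calc 1 - ε < μ.real K := by
        rw [probReal_compl_eq_one_sub hK.measurableSet] at hKc; linarith
    _ = ∫ w, K.indicator 1 w ∂μ := (integral_indicator_one hK.measurableSet).symm
    _ ≤ ∫ w, ∑ x, ρ x w ∂μ := integral_mono ((integrable_const 1).indicator hK.measurableSet)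
        (integrable_finsetSum _ fun x _ => ρ.integrable μ x) hind
    _ = ∑ x, ∫ w, ρ x w ∂μ := integral_finsetSum _ fun x _ => ρ.integrable μ x

theorem tendstoUniformly_integral_of_tendsto_integral {X ι : Type*} [MetricSpace X]
    [TopologicalSpace.SeparableSpace X] [MeasurableSpace X] [OpensMeasurableSpace X]
    {μ : ℕ → Measure X} {μ₀ : Measure X} [∀ n, IsProbabilityMeasure (μ n)]
    [IsProbabilityMeasure μ₀]
    (hμ : ∀ φ : X →ᵇ ℝ, Tendsto (fun n => ∫ w, φ w ∂μ n) atTop (𝓝 (∫ w, φ w ∂μ₀)))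
    {g : ℕ → ι → X → ℝ} {h : ι → X → ℝ} {M : ℝ}
    (hg_meas : ∀ n i, Measurable (g n i)) (hg_bdd : ∀ n i w, |g n i w| ≤ M)
    (hg : ∀ x, TendstoUniformly (fun (p : ℕ × X) i => g p.1 i p.2) (fun i => h i x)
      (atTop ×ˢ 𝓝 x)) :
    TendstoUniformly (fun n i => ∫ w, g n i w ∂μ n) (fun i => ∫ w, h i w ∂μ₀) atTop := by
  have hh_lim := fun w i => tendsto_of_tendstoUniformly_atTop_prod_nhds (hg w) i
  have hh_meas : ∀ i, Measurable (h i) := fun i =>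
    measurable_of_tendsto_metrizable (hg_meas · i) (tendsto_pi_nhds.mpr fun w => hh_lim w i)
  have hg_bdd' : ∀ n i w, |g n i w| ≤ |M| := fun n i w => (hg_bdd n i w).trans (le_abs_self M)
  have hh_bdd : ∀ i w, |h i w| ≤ |M| := fun i w =>
    le_of_tendsto' (hh_lim w i).abs fun n => hg_bdd' n i w
  rw [Metric.tendstoUniformly_iff]
  intro ε hε
  -- the three error terms in the final estimate add up to `(2 |M| + 3) η`
  set η := ε / (2 * |M| + 3)
  have hη : 0 < η := by positivity
  have hηε : (2 * |M| + 3) * η = ε := mul_div_cancel₀ _ (by positivity)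
  choose r hr N hN using
    fun x => exists_ball_abs_sub_lt_of_tendstoUniformly_atTop_prod_nhds hg x hη
  obtain ⟨s, K, ρ, hρ, hmass⟩ := exists_partitionOfUnity_isSubordinate_ball_one_sub_lt μ₀ hr hη
  have hρ_ball : ∀ x w, ρ x w ≠ 0 → w ∈ Metric.ball x.1 (r x) := fun x w hw =>
    hρ x (subset_tsupport _ hw)
  have hρ_lim : ∀ x, Tendsto (fun n => ∫ w, ρ x w ∂μ n) atTop (𝓝 (∫ w, ρ x w ∂μ₀)) := fun x =>
    hμ (.ofNormedAddCommGroup (ρ x) (ρ x).continuous 1 fun w => by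
      rw [Real.norm_eq_abs, abs_of_nonneg (ρ.nonneg x w)]; exact ρ.le_one x w)
  have hcomb := Metric.tendstoUniformly_iff.mp
    (tendstoUniformly_sum_mul hρ_lim (c := fun i x => h i x) fun i x => hh_bdd i x) η hη
  have hmass_n : ∀ᶠ n in atTop, 1 - η < ∑ x, ∫ w, ρ x w ∂μ n :=
    (tendsto_finsetSum _ fun x _ => hρ_lim x).eventually_const_lt hmass
  filter_upwards [hcomb, hmass_n, eventually_ge_atTop (s.sup N)] with n hcomb_n hmass_n hn i
  have hg_near : |∫ w, g n i w ∂μ n - ∑ x : s, h i x * ∫ w, ρ x w ∂μ n|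
      ≤ |M| * (1 - ∑ x, ∫ w, ρ x w ∂μ n) + η :=
    ρ.abs_integral_sub_sum_mul_integral_le (μ n) (hg_meas n i).aestronglyMeasurable
      (hg_bdd' n i) hη.le fun x w hw => ((hN x w (hρ_ball x w hw) i).1 n
        ((Finset.le_sup x.2).trans hn)).le
  have hh_near : |∫ w, h i w ∂μ₀ - ∑ x : s, h i x * ∫ w, ρ x w ∂μ₀|
      ≤ |M| * (1 - ∑ x, ∫ w, ρ x w ∂μ₀) + η :=
    ρ.abs_integral_sub_sum_mul_integral_le μ₀ (hh_meas i).aestronglyMeasurable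
      (hh_bdd i) hη.le fun x w hw => (hN x w (hρ_ball x w hw) i).2
  rw [← Real.dist_eq] at hg_near hh_near
  have hmass_g : |M| * (1 - ∑ x, ∫ w, ρ x w ∂μ n) ≤ |M| * η :=
    mul_le_mul_of_nonneg_left (by linarith) (abs_nonneg M)
  have hmass_h : |M| * (1 - ∑ x, ∫ w, ρ x w ∂μ₀) ≤ |M| * η :=
    mul_le_mul_of_nonneg_left (by linarith) (abs_nonneg M)
  calc dist (∫ w, h i w ∂μ₀) (∫ w, g n i w ∂μ n)
      ≤ dist (∫ w, h i w ∂μ₀) (∑ x : s, h i x * ∫ w, ρ x w ∂μ₀)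
        + dist (∑ x : s, h i x * ∫ w, ρ x w ∂μ₀) (∑ x : s, h i x * ∫ w, ρ x w ∂μ n)
        + dist (∑ x : s, h i x * ∫ w, ρ x w ∂μ n) (∫ w, g n i w ∂μ n) := dist_triangle4 _ _ _ _
    _ < ε := by rw [dist_comm _ (∫ w, g n i w ∂μ n)]; linarith [hcomb_n i]

theorem setIntegral_univ_prod_eq_integral_mul_toReal {X Y : Type*} [MeasurableSpace X]
    [MeasurableSpace Y] {ν : Measure (X × Y)} {μ : Measure X} {k : X → ℝ≥0∞} (hk : Measurable k)
    (hk_fin : ∀ᵐ x ∂μ, k x < ∞) {B : Set Y}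
    (hν : ∀ A, MeasurableSet A → ν (A ×ˢ B) = ∫⁻ x in A, k x ∂μ) {f : X → ℝ}
    (hf : Measurable f) : ∫ p in Set.univ ×ˢ B, f p.1 ∂ν = ∫ x, f x * (k x).toReal ∂μ := by
  have hmap : (ν.restrict (Set.univ ×ˢ B)).map Prod.fst = μ.withDensity k := by
    ext A hA
    rw [Measure.map_apply measurable_fst hA, Measure.restrict_apply (measurable_fst hA),
      withDensity_apply _ hA, ← hν A hA, ← Set.prod_univ, Set.prod_inter_prod, Set.inter_univ,
      Set.univ_inter]
  calc ∫ p in Set.univ ×ˢ B, f p.1 ∂ν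
      = ∫ x, f x ∂(ν.restrict (Set.univ ×ˢ B)).map Prod.fst :=
        (integral_map measurable_fst.aemeasurable hf.aestronglyMeasurable).symm
    _ = ∫ x, (k x).toReal • f x ∂μ := by
        rw [hmap, integral_withDensity_eq_integral_toReal_smul hk hk_fin]
    _ = ∫ x, f x * (k x).toReal ∂μ := by simp_rw [smul_eq_mul, mul_comm]

theorem semiUniformFeller_pomdp2_weak_tv_general
    {W Y A : Type*}
    [MetricSpace W] [TopologicalSpace.SeparableSpace W] [MeasurableSpace W] [BorelSpace W]
    [MeasurableSpace Y]
    [MetricSpace A] [MeasurableSpace A]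
    (P2 : Kernel (W × A) W) [IsMarkovKernel P2]
    (Q2 : Kernel (A × W) Y) [IsMarkovKernel Q2]
    (P : Kernel (W × A) (W × Y))
    (hP : ∀ (w : W) (a : A) (B : Set W) (C : Set Y), MeasurableSet B → MeasurableSet C →
      P (w, a) (B ×ˢ C) = ∫⁻ w' in B, Q2 (a, w') C ∂(P2 (w, a)))
    (hP2 : ∀ (p : ℕ → W × A) (p₀ : W × A), Tendsto p atTop (𝓝 p₀) →
      ∀ f : BoundedContinuousFunction W ℝ,
        Tendsto (fun n => ∫ x, f x ∂(P2 (p n))) atTop (𝓝 (∫ x, f x ∂(P2 p₀))))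
    (hQ2 : ∀ (p : ℕ → A × W) (p₀ : A × W), Tendsto p atTop (𝓝 p₀) →
      Tendsto (fun n => ⨆ C : {C : Set Y // MeasurableSet C},
        |((Q2 (p n)) C.1).toReal - ((Q2 p₀) C.1).toReal|) atTop (𝓝 0)) :
    SemiUniformFeller P := by
  intro s t hst f
  have hQ2_meas : ∀ a C, MeasurableSet C → Measurable fun w => Q2 (a, w) C := fun a C hC =>
    (Q2.measurable_coe hC).comp measurable_prodMk_left
  have hQ2_le : ∀ q C, |(Q2 q C).toReal| ≤ 1 := fun q C => by
    rw [abs_of_nonneg ENNReal.toReal_nonneg]; exact measureReal_le_one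
  have hrepr : ∀ p (C : {C : Set Y // MeasurableSet C}),
      ∫ x in Set.univ ×ˢ C.1, f x.1 ∂(P p) = ∫ w, f w * (Q2 (p.2, w) C.1).toReal ∂(P2 p) :=
    fun p C => setIntegral_univ_prod_eq_integral_mul_toReal (hQ2_meas p.2 C C.2)
      (.of_forall fun _ => measure_lt_top _ _) (fun B hB => hP p.1 p.2 B C hB C.2)
      f.continuous.measurable
  have hconv : ∀ x, TendstoUniformly
      (fun (p : ℕ × W) (C : {C : Set Y // MeasurableSet C}) =>
        f p.2 * (Q2 ((s p.1).2, p.2) C.1).toReal)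
      (fun C => f x * (Q2 (t.2, x) C.1).toReal) (atTop ×ˢ 𝓝 x) := fun x =>
    have hpair : Tendsto (fun p : ℕ × W => ((s p.1).2, p.2)) (atTop ×ˢ 𝓝 x) (𝓝 (t.2, x)) :=
      ((continuous_snd.tendsto t).comp (hst.comp tendsto_fst)).prodMk_nhds tendsto_snd
    ((Q2.tendstoUniformly_nhds_of_tendsto_iSup (hQ2 · _)).comp_tendsto hpair).mul_of_abs_le
      ((f.continuous.tendsto x).comp tendsto_snd) fun C => hQ2_le _ _
  have hmeas : ∀ (n : ℕ) (C : {C : Set Y // MeasurableSet C}),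
      Measurable fun w => f w * (Q2 ((s n).2, w) C.1).toReal := fun n C =>
    f.continuous.measurable.mul (hQ2_meas _ C.1 C.2).ennreal_toReal
  have hbdd : ∀ (n : ℕ) (C : {C : Set Y // MeasurableSet C}) w,
      |f w * (Q2 ((s n).2, w) C.1).toReal| ≤ ‖f‖ := fun n C w => by
    rw [abs_mul]
    exact (mul_le_of_le_one_right (abs_nonneg _) (hQ2_le _ _)).trans (f.norm_coe_le_norm w)
  have hunif := tendstoUniformly_integral_of_tendsto_integral (hP2 s t hst) hmeas hbdd hconv
  simp only [hrepr]
  exact tendsto_iSup_abs_sub_of_tendstoUniformly hunif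

/-- For a `POMDP₂` with transition kernel `P(B × C | w, a) = ∫_B Q₂(C | a, w') P₂(dw' | w, a)`,
if `P₂` is weakly continuous and `Q₂` is continuous in total variation, then `P` is semi-uniform
Feller. -/
theorem semiUniformFeller_pomdp2_weak_tv
    {W Y A : Type*}
    [MetricSpace W] [TopologicalSpace.SeparableSpace W] [MeasurableSpace W] [BorelSpace W]
    [StandardBorelSpace W] [Nonempty W]
    [MetricSpace Y] [TopologicalSpace.SeparableSpace Y] [MeasurableSpace Y] [BorelSpace Y]
    [StandardBorelSpace Y] [Nonempty Y]
    [MetricSpace A] [TopologicalSpace.SeparableSpace A] [MeasurableSpace A] [BorelSpace A]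
    [StandardBorelSpace A] [Nonempty A]
    (P2 : Kernel (W × A) W) [IsMarkovKernel P2]
    (Q2 : Kernel (A × W) Y) [IsMarkovKernel Q2]
    (P : Kernel (W × A) (W × Y)) [IsMarkovKernel P]
    (hP : ∀ (w : W) (a : A) (B : Set W) (C : Set Y), MeasurableSet B → MeasurableSet C →
      P (w, a) (B ×ˢ C) = ∫⁻ w' in B, Q2 (a, w') C ∂(P2 (w, a)))
    (hP2 : ∀ (p : ℕ → W × A) (p₀ : W × A), Tendsto p atTop (𝓝 p₀) →
      ∀ f : BoundedContinuousFunction W ℝ,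
        Tendsto (fun n => ∫ x, f x ∂(P2 (p n))) atTop (𝓝 (∫ x, f x ∂(P2 p₀))))
    (hQ2 : ∀ (p : ℕ → A × W) (p₀ : A × W), Tendsto p atTop (𝓝 p₀) →
      Tendsto (fun n => ⨆ C : {C : Set Y // MeasurableSet C},
        |((Q2 (p n)) C.1).toReal - ((Q2 p₀) C.1).toReal|) atTop (𝓝 0)) :
    SemiUniformFeller P :=
  semiUniformFeller_pomdp2_weak_tv_general P2 Q2 P hP hP2 hQ2
end

section
/- Let P2 be a stochastic kernel on W given W×A and Q2 a stochastic kernel on Y given A×W, and define the stochastic kernel P on W×Y given W×A by P(B×C|w,a) := ∫_B Q2(C|a,w') P2(dw'|w,a) for Borel B ⊆ W and C ⊆ Y. If P2 is continuous in total variation (in (w,a)) and for each fixed w' ∈ W the map a ↦ Q2(·|a,w') is continuous in total variation, then P is semi-uniform Feller. -/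
/-!
Disintegrating `P` along the first coordinate, `∫_{W × C} f(w') dP(w, a)` is the `P₂(w, a)`-integral
of `w' ↦ Q₂(C | a, w') f(w')`. Moving from `(wₙ, aₙ)` to `(w, a)` first changes the integrating
measure, which costs at most `2‖f‖ ‖P₂(wₙ, aₙ) − P₂(w, a)‖_TV` uniformly in `C`, and then the
integrand, which costs at most `‖f‖ ∫ ‖Q₂(aₙ, w') − Q₂(a, w')‖_TV P₂(dw' | w, a)`; the latter tends
to `0` by dominated convergence. Dominated convergence needs `w' ↦ ‖Q₂(aₙ, w') − Q₂(a, w')‖_TV` to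
be measurable: on a countably generated space the supremum over all measurable sets may be taken
over the countable algebra generated by a countable generating family.
-/

open MeasureTheory ProbabilityTheory Filter Topology

open Set

namespace MeasureTheory.Measure

variable {α : Type*} [MeasurableSpace α]

/-- Normalised as `sup_s |μ s - ν s|`, which is half the `L¹` distance of densities. -/
noncomputable def tvDist (μ ν : Measure α) : ℝ :=
  ⨆ s : {s : Set α // MeasurableSet s}, |μ.real s - ν.real s|

lemma restrict_le_restrict_of_forall_le {μ ν : Measure α} {s : Set α} (hs : MeasurableSet s)
    (h : ∀ t, MeasurableSet t → t ⊆ s → ν t ≤ μ t) : ν.restrict s ≤ μ.restrict s :=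
  Measure.le_iff.2 fun t ht => by
    simpa only [restrict_apply ht] using h _ (ht.inter hs) inter_subset_right

section Finite

variable (μ ν : Measure α) [IsFiniteMeasure μ] [IsFiniteMeasure ν]

lemma abs_measureReal_sub_le (s : Set α) :
    |μ.real s - ν.real s| ≤ μ.real univ + ν.real univ := by
  have hμ : μ.real s ≤ μ.real univ := measureReal_mono (subset_univ s)
  have hν : ν.real s ≤ ν.real univ := measureReal_mono (subset_univ s)
  rw [abs_sub_le_iff]
  constructor <;> linarith [measureReal_nonneg (μ := μ) (s := s),
    measureReal_nonneg (μ := ν) (s := s)]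

lemma abs_measureReal_sub_le_tvDist {s : Set α} (hs : MeasurableSet s) :
    |μ.real s - ν.real s| ≤ tvDist μ ν :=
  le_ciSup (f := fun s : {s : Set α // MeasurableSet s} => |μ.real s - ν.real s|)
    ⟨_, forall_mem_range.2 fun s => abs_measureReal_sub_le μ ν s⟩ ⟨s, hs⟩

lemma tvDist_nonneg : 0 ≤ tvDist μ ν :=
  (abs_nonneg _).trans (abs_measureReal_sub_le_tvDist μ ν MeasurableSet.empty)

lemma tvDist_le : tvDist μ ν ≤ μ.real univ + ν.real univ :=
  Real.iSup_le (fun s => abs_measureReal_sub_le μ ν s) (by positivity)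

variable {μ ν}

lemma abs_integral_sub_integral_le_of_le (hνμ : ν ≤ μ) {g : α → ℝ} {M : ℝ}
    (hg : AEStronglyMeasurable g μ) (hgM : ∀ x, |g x| ≤ M) :
    |∫ x, g x ∂μ - ∫ x, g x ∂ν| ≤ M * (μ.real univ - ν.real univ) := by
  have hint : Integrable g μ :=
    Integrable.of_bound hg M (ae_of_all _ fun x => by simpa using hgM x)
  calc |∫ x, g x ∂μ - ∫ x, g x ∂ν| = |∫ x, g x ∂(μ - ν)| := by
        conv_lhs => rw [← Measure.sub_add_cancel_of_le hνμ]
        rw [integral_add_measure (hint.mono_measure Measure.sub_le) (hint.mono_measure hνμ),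
          add_sub_cancel_right]
    _ ≤ M * (μ - ν).real univ := by
        simpa using norm_integral_le_of_norm_le_const (μ := μ - ν) (f := g)
          (ae_of_all _ fun x => by simpa using hgM x)
    _ = M * (μ.real univ - ν.real univ) := by
        rw [measureReal_def, Measure.sub_apply MeasurableSet.univ hνμ,
          ENNReal.toReal_sub_of_le (hνμ univ) (measure_ne_top _ _)]
        rfl

lemma abs_integral_sub_integral_le_two_mul_tvDist {g : α → ℝ} {M : ℝ} (hg : Measurable g)
    (hM : 0 ≤ M) (hgM : ∀ x, |g x| ≤ M) :
    |∫ x, g x ∂μ - ∫ x, g x ∂ν| ≤ 2 * M * tvDist μ ν := by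
  obtain ⟨S, hS, hνμ, hμν⟩ := hahn_decomposition μ ν
  have hint (ρ : Measure α) [IsFiniteMeasure ρ] : Integrable g ρ :=
    Integrable.of_bound hg.aestronglyMeasurable M (ae_of_all _ fun x => by simpa using hgM x)
  have hS₁ := abs_integral_sub_integral_le_of_le (restrict_le_restrict_of_forall_le hS hνμ)
    hg.aestronglyMeasurable hgM
  have hS₂ := abs_integral_sub_integral_le_of_le (restrict_le_restrict_of_forall_le hS.compl hμν)
    hg.aestronglyMeasurable hgM
  simp only [measureReal_restrict_apply_univ] at hS₁ hS₂
  rw [← integral_add_compl hS (hint μ), ← integral_add_compl hS (hint ν)]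
  calc _ ≤ |∫ x in S, g x ∂μ - ∫ x in S, g x ∂ν| + |∫ x in Sᶜ, g x ∂ν - ∫ x in Sᶜ, g x ∂μ| := by
        rw [abs_sub_comm (∫ x in Sᶜ, g x ∂ν)]
        exact (abs_add_le _ _).trans_eq' (by ring_nf)
    _ ≤ M * (μ.real S - ν.real S) + M * (ν.real Sᶜ - μ.real Sᶜ) := add_le_add hS₁ hS₂
    _ ≤ M * tvDist μ ν + M * tvDist μ ν := by
        gcongr
        · exact (le_abs_self _).trans (abs_measureReal_sub_le_tvDist μ ν hS)
        · exact ((neg_sub _ _).symm.trans_le (neg_le_abs _)).trans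
            (abs_measureReal_sub_le_tvDist μ ν hS.compl)
    _ = 2 * M * tvDist μ ν := by ring

end Finite

lemma tvDist_le_two (μ ν : Measure α) [IsProbabilityMeasure μ] [IsProbabilityMeasure ν] :
    tvDist μ ν ≤ 2 := by
  simpa [one_add_one_eq_two] using tvDist_le μ ν

section CountablyGenerated

open MeasurableSpace
open scoped symmDiff

variable [CountablyGenerated α]

lemma measurableSet_of_mem_generateSetAlgebra {t : Set α}
    (ht : t ∈ generateSetAlgebra (countableGeneratingSet α)) : MeasurableSet t := by
  rw [← generateFrom_countableGeneratingSet (α := α), ← generateFrom_generateSetAlgebra_eq]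
  exact measurableSet_generateFrom ht

section Finite

variable (μ ν : Measure α) [IsFiniteMeasure μ] [IsFiniteMeasure ν]

lemma exists_mem_generateSetAlgebra_abs_measureReal_sub_le {s : Set α} (hs : MeasurableSet s)
    {ε : ℝ} (hε : 0 < ε) : ∃ t ∈ generateSetAlgebra (countableGeneratingSet α),
      |μ.real s - ν.real s| ≤ |μ.real t - ν.real t| + ε := by
  have hA := isSetAlgebra_generateSetAlgebra (𝒜 := countableGeneratingSet α)
  obtain ⟨t, ht, hts⟩ := exists_measure_symmDiff_lt_of_generateFrom_isSetRing (μ := μ + ν)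
    hA.isSetRing ⟨{univ}, countable_singleton _, singleton_subset_iff.2 hA.univ_mem, by simp⟩
    (by rw [generateFrom_generateSetAlgebra_eq, generateFrom_countableGeneratingSet]) hs
    (ENNReal.ofReal_pos.2 hε)
  have hsum : μ.real (t ∆ s) + ν.real (t ∆ s) < ε := by
    rw [← measureReal_add_apply]
    exact ENNReal.toReal_lt_of_lt_ofReal hts
  have htm := measurableSet_of_mem_generateSetAlgebra ht
  have hμ := abs_le.1 <| abs_measureReal_sub_le_measureReal_symmDiff (μ := μ)
    htm.nullMeasurableSet hs.nullMeasurableSet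
  have hν := abs_le.1 <| abs_measureReal_sub_le_measureReal_symmDiff (μ := ν)
    htm.nullMeasurableSet hs.nullMeasurableSet
  refine ⟨t, ht, abs_sub_le_iff.2 ⟨?_, ?_⟩⟩ <;>
    linarith [le_abs_self (μ.real t - ν.real t), neg_abs_le (μ.real t - ν.real t)]

lemma tvDist_eq_iSup_generateSetAlgebra :
    tvDist μ ν = ⨆ t : generateSetAlgebra (countableGeneratingSet α), |μ.real t - ν.real t| := by
  have hbdd : BddAbove (range fun t : generateSetAlgebra (countableGeneratingSet α) =>
      |μ.real t - ν.real t|) :=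
    ⟨_, forall_mem_range.2 fun t => abs_measureReal_sub_le μ ν t⟩
  refine le_antisymm (Real.iSup_le (fun s => le_of_forall_pos_le_add fun ε hε => ?_)
    (Real.iSup_nonneg fun t => abs_nonneg _)) (Real.iSup_le (fun t =>
      abs_measureReal_sub_le_tvDist μ ν (measurableSet_of_mem_generateSetAlgebra t.2))
      (tvDist_nonneg μ ν))
  obtain ⟨t, ht, hst⟩ := exists_mem_generateSetAlgebra_abs_measureReal_sub_le μ ν s.2 hε
  exact hst.trans (by gcongr; exact le_ciSup hbdd (⟨t, ht⟩ : generateSetAlgebra _))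

end Finite

lemma measurable_tvDist {β : Type*} [MeasurableSpace β] (κ η : Kernel β α) [IsFiniteKernel κ]
    [IsFiniteKernel η] : Measurable fun b => tvDist (κ b) (η b) := by
  have : Countable (generateSetAlgebra (countableGeneratingSet α)) :=
    (countable_generateSetAlgebra countable_countableGeneratingSet).to_subtype
  simp_rw [tvDist_eq_iSup_generateSetAlgebra]
  exact Measurable.iSup fun t =>
    ((κ.measurable_coe (measurableSet_of_mem_generateSetAlgebra t.2)).ennreal_toReal.sub
      (η.measurable_coe (measurableSet_of_mem_generateSetAlgebra t.2)).ennreal_toReal).abs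

end CountablyGenerated

end MeasureTheory.Measure

open MeasureTheory.Measure

section Kernel

variable {X Y : Type*} [MeasurableSpace X] [MeasurableSpace Y]

lemma map_fst_restrict_univ_prod_eq_withDensity {ρ : Measure (X × Y)} {μ : Measure X}
    {κ : Kernel X Y} {C : Set Y} (h : ∀ s, MeasurableSet s → ρ (s ×ˢ C) = ∫⁻ x in s, κ x C ∂μ) :
    (ρ.restrict (univ ×ˢ C)).map Prod.fst = μ.withDensity fun x => κ x C := by
  ext s hs
  rw [Measure.map_apply measurable_fst hs, Measure.restrict_apply (measurable_fst hs),
    withDensity_apply _ hs, ← h s hs, ← prod_univ, prod_inter_prod, inter_univ, univ_inter]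

lemma setIntegral_univ_prod_comp_fst_eq {ρ : Measure (X × Y)} {μ : Measure X}
    {κ : Kernel X Y} [IsFiniteKernel κ] {C : Set Y} (hC : MeasurableSet C)
    (h : ∀ s, MeasurableSet s → ρ (s ×ˢ C) = ∫⁻ x in s, κ x C ∂μ) {f : X → ℝ}
    (hf : Measurable f) :
    ∫ z in univ ×ˢ C, f z.1 ∂ρ = ∫ x, (κ x).real C * f x ∂μ := by
  rw [← integral_map measurable_fst.aemeasurable hf.aestronglyMeasurable,
    map_fst_restrict_univ_prod_eq_withDensity h,
    integral_withDensity_eq_integral_toReal_smul (κ.measurable_coe hC)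
      (ae_of_all _ fun x => measure_lt_top _ _)]
  rfl

variable [MeasurableSpace.CountablyGenerated Y]

lemma abs_integral_sub_integral_le_tvDist_add_integral_tvDist {μ ν : Measure X}
    [IsFiniteMeasure μ] [IsFiniteMeasure ν] {κ η : Kernel X Y} [IsMarkovKernel κ]
    [IsMarkovKernel η] {C : Set Y} (hC : MeasurableSet C) {f : X → ℝ} {M : ℝ}
    (hf : Measurable f) (hM : 0 ≤ M) (hfM : ∀ x, |f x| ≤ M) :
    |∫ x, (κ x).real C * f x ∂μ - ∫ x, (η x).real C * f x ∂ν| ≤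
      2 * M * tvDist μ ν + M * ∫ x, tvDist (κ x) (η x) ∂ν := by
  have hbound (ξ : Kernel X Y) [IsMarkovKernel ξ] (x : X) : |(ξ x).real C * f x| ≤ M := by
    rw [abs_mul, abs_of_nonneg measureReal_nonneg]
    exact (mul_le_of_le_one_left (abs_nonneg _) measureReal_le_one).trans (hfM x)
  have hmeas (ξ : Kernel X Y) : Measurable fun x => (ξ x).real C * f x :=
    (ξ.measurable_coe hC).ennreal_toReal.mul hf
  have hint (ξ : Kernel X Y) [IsMarkovKernel ξ] : Integrable (fun x => (ξ x).real C * f x) ν :=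
    Integrable.of_bound (hmeas ξ).aestronglyMeasurable M
      (ae_of_all _ fun x => by simpa using hbound ξ x)
  have hdiff (x : X) :
      ‖(κ x).real C * f x - (η x).real C * f x‖ ≤ M * tvDist (κ x) (η x) := by
    rw [Real.norm_eq_abs, ← sub_mul, abs_mul, mul_comm]
    exact mul_le_mul (hfM x) (abs_measureReal_sub_le_tvDist _ _ hC) (abs_nonneg _) hM
  have hint_tv : Integrable (fun x => tvDist (κ x) (η x)) ν :=
    Integrable.of_bound (measurable_tvDist κ η).aestronglyMeasurable 2 (ae_of_all _ fun x => by
      simpa [Real.norm_of_nonneg (tvDist_nonneg _ _)] using tvDist_le_two (κ x) (η x))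
  calc _ = |(∫ x, (κ x).real C * f x ∂μ - ∫ x, (κ x).real C * f x ∂ν) +
        ∫ x, ((κ x).real C * f x - (η x).real C * f x) ∂ν| := by
        rw [integral_sub (hint κ) (hint η)]
        ring_nf
    _ ≤ |∫ x, (κ x).real C * f x ∂μ - ∫ x, (κ x).real C * f x ∂ν| +
        ‖∫ x, ((κ x).real C * f x - (η x).real C * f x) ∂ν‖ := abs_add_le _ _
    _ ≤ 2 * M * tvDist μ ν + M * ∫ x, tvDist (κ x) (η x) ∂ν := by
        gcongr
        · exact abs_integral_sub_integral_le_two_mul_tvDist (hmeas κ) hM (hbound κ)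
        · rw [← integral_const_mul]
          exact norm_integral_le_of_norm_le (hint_tv.const_mul M) (ae_of_all _ hdiff)

lemma tendsto_integral_tvDist {ν : Measure X} [IsFiniteMeasure ν] {κ : ℕ → Kernel X Y}
    [∀ n, IsMarkovKernel (κ n)] {η : Kernel X Y} [IsMarkovKernel η]
    (h : ∀ x, Tendsto (fun n => tvDist (κ n x) (η x)) atTop (𝓝 0)) :
    Tendsto (fun n => ∫ x, tvDist (κ n x) (η x) ∂ν) atTop (𝓝 0) := by
  simpa using tendsto_integral_of_dominated_convergence (fun _ => 2)
    (fun n => (measurable_tvDist (κ n) η).aestronglyMeasurable) (integrable_const 2)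
    (fun n => ae_of_all _ fun x => by
      simpa [Real.norm_of_nonneg (tvDist_nonneg _ _)] using tvDist_le_two (κ n x) (η x))
    (ae_of_all _ h)

end Kernel

theorem semiUniformFeller_pomdp2_tv_tv_general
    {W Y A : Type*}
    [MetricSpace W] [MeasurableSpace W] [BorelSpace W]
    [MeasurableSpace Y] [StandardBorelSpace Y]
    [MetricSpace A] [MeasurableSpace A]
    (P2 : Kernel (W × A) W) [IsMarkovKernel P2]
    (Q2 : Kernel (A × W) Y) [IsMarkovKernel Q2]
    (P : Kernel (W × A) (W × Y))
    (hP : ∀ (w : W) (a : A) (B : Set W) (C : Set Y), MeasurableSet B → MeasurableSet C →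
      P (w, a) (B ×ˢ C) = ∫⁻ w' in B, Q2 (a, w') C ∂(P2 (w, a)))
    (hP2 : ∀ (p : ℕ → W × A) (p₀ : W × A), Tendsto p atTop (𝓝 p₀) →
      Tendsto (fun n => ⨆ B : {B : Set W // MeasurableSet B},
        |((P2 (p n)) B.1).toReal - ((P2 p₀) B.1).toReal|) atTop (𝓝 0))
    (hQ2 : ∀ (w' : W) (a : ℕ → A) (a₀ : A), Tendsto a atTop (𝓝 a₀) →
      Tendsto (fun n => ⨆ C : {C : Set Y // MeasurableSet C},
        |((Q2 (a n, w')) C.1).toReal - ((Q2 (a₀, w')) C.1).toReal|) atTop (𝓝 0)) :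
    SemiUniformFeller P := by
  intro s t hst f
  have hdisint (q : W × A) {C : Set Y} (hC : MeasurableSet C) :
      ∫ z in univ ×ˢ C, f z.1 ∂(P q) = ∫ w', (Q2.sectR q.2 w').real C * f w' ∂(P2 q) :=
    setIntegral_univ_prod_comp_fst_eq hC (fun B hB => hP q.1 q.2 B C hB hC)
      f.continuous.measurable
  have hP2_tendsto : Tendsto (fun n => tvDist (P2 (s n)) (P2 t)) atTop (𝓝 0) := hP2 s t hst
  have hQ2_tendsto : Tendsto (fun n => ∫ w', tvDist (Q2.sectR (s n).2 w') (Q2.sectR t.2 w')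
      ∂(P2 t)) atTop (𝓝 0) :=
    tendsto_integral_tvDist fun w' => hQ2 w' _ _ ((continuous_snd.tendsto t).comp hst)
  have hbound_nonneg (n : ℕ) : 0 ≤ 2 * ‖f‖ * tvDist (P2 (s n)) (P2 t) +
      ‖f‖ * ∫ w', tvDist (Q2.sectR (s n).2 w') (Q2.sectR t.2 w') ∂(P2 t) :=
    add_nonneg (mul_nonneg (by positivity) (tvDist_nonneg _ _))
      (mul_nonneg (norm_nonneg f) (integral_nonneg fun _ => tvDist_nonneg _ _))
  refine squeeze_zero (fun n => Real.iSup_nonneg fun _ => abs_nonneg _)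
    (fun n => Real.iSup_le (fun C => ?_) (hbound_nonneg n))
    (by simpa using (hP2_tendsto.const_mul (2 * ‖f‖)).add (hQ2_tendsto.const_mul ‖f‖))
  rw [hdisint _ C.2, hdisint _ C.2]
  exact abs_integral_sub_integral_le_tvDist_add_integral_tvDist C.2 f.continuous.measurable
    (norm_nonneg f) fun x => by simpa using f.norm_coe_le_norm x

/-- For a `POMDP₂` with transition kernel `P(B × C | w, a) = ∫_B Q₂(C | a, w') P₂(dw' | w, a)`,
if `P₂` is continuous in total variation in `(w, a)` and, for each fixed `w'`, the map
`a ↦ Q₂(· | a, w')` is continuous in total variation, then `P` is semi-uniform Feller. -/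
theorem semiUniformFeller_pomdp2_tv_tv
    {W Y A : Type*}
    [MetricSpace W] [TopologicalSpace.SeparableSpace W] [MeasurableSpace W] [BorelSpace W]
    [StandardBorelSpace W] [Nonempty W]
    [MetricSpace Y] [TopologicalSpace.SeparableSpace Y] [MeasurableSpace Y] [BorelSpace Y]
    [StandardBorelSpace Y] [Nonempty Y]
    [MetricSpace A] [TopologicalSpace.SeparableSpace A] [MeasurableSpace A] [BorelSpace A]
    [StandardBorelSpace A] [Nonempty A]
    (P2 : Kernel (W × A) W) [IsMarkovKernel P2]
    (Q2 : Kernel (A × W) Y) [IsMarkovKernel Q2]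
    (P : Kernel (W × A) (W × Y)) [IsMarkovKernel P]
    (hP : ∀ (w : W) (a : A) (B : Set W) (C : Set Y), MeasurableSet B → MeasurableSet C →
      P (w, a) (B ×ˢ C) = ∫⁻ w' in B, Q2 (a, w') C ∂(P2 (w, a)))
    (hP2 : ∀ (p : ℕ → W × A) (p₀ : W × A), Tendsto p atTop (𝓝 p₀) →
      Tendsto (fun n => ⨆ B : {B : Set W // MeasurableSet B},
        |((P2 (p n)) B.1).toReal - ((P2 p₀) B.1).toReal|) atTop (𝓝 0))
    (hQ2 : ∀ (w' : W) (a : ℕ → A) (a₀ : A), Tendsto a atTop (𝓝 a₀) →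
      Tendsto (fun n => ⨆ C : {C : Set Y // MeasurableSet C},
        |((Q2 (a n, w')) C.1).toReal - ((Q2 (a₀, w')) C.1).toReal|) atTop (𝓝 0)) :
    SemiUniformFeller P :=
  semiUniformFeller_pomdp2_tv_tv_general P2 Q2 P hP hP2 hQ2
end

section
/- Let W = Y = A = ℝ, and for w ∈ ℝ write w₊ = max(w,0) and w₋ = min(w,0). Define P2(·|w,a) := δ_{w₊} (the Dirac measure at w₊) and Q2(·|w) := δ_{w₋}. Then: (1) P2 and Q2 are weakly continuous in w but neither is continuous in total variation at w = 0; and (2) the kernel P on ℝ×ℝ given ℝ×ℝ defined by P(B×C|w,a) := ∫_B Q2(C|w') P2(dw'|w,a) satisfies P(·|w,a) = δ_{(w₊, 0)}, i.e., P(B×C|w,a) = 1{w₊ ∈ B}·1{0 ∈ C}, and P is semi-uniform Feller: for every sequence w^(n) → w in ℝ and every bounded continuous f: ℝ → ℝ, sup_{C ∈ B(ℝ)} |∫ f(w') P(dw',C|w^(n),a^(n)) − ∫ f(w') P(dw',C|w,a)| = sup_{C ∈ B(ℝ)} 1{0 ∈ C}·|f(w₊^(n)) − f(w₊)| → 0.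 -/
open MeasureTheory ProbabilityTheory Filter Topology

/-! Everything reduces to Dirac masses. `δ_{x n} → δ_x` weakly as soon as `x n → x`, while
`δ_x` and `δ_y` are at total-variation distance `1` whenever `x ≠ y`; so the sequences
`w n = ±1/(n+1)` show that neither `P₂` nor `Q₂` is continuous in total variation at `0`.
The kernel `P(·|w,a) = δ_{(w₊, 0)}` has a constant second coordinate, so for every
`C` the difference of the two integrals is either `0` or `f(w₊ⁿ) − f(w₊)`, and the
semi-uniform Feller supremum collapses to `|f(w₊ⁿ) − f(w₊)|`. -/

theorem ciSup_eq_of_forall_le_of_eq {ι α : Type*} [ConditionallyCompleteLattice α]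
    {f : ι → α} {c : α} (hle : ∀ i, f i ≤ c) (i₀ : ι) (h₀ : f i₀ = c) : ⨆ i, f i = c :=
  haveI : Nonempty ι := ⟨i₀⟩
  (show IsGreatest (Set.range f) c from ⟨⟨i₀, h₀⟩, Set.forall_mem_range.2 hle⟩).isLUB.ciSup_eq

section Dirac

variable {X : Type*} [MeasurableSpace X] [MeasurableSingletonClass X]

theorem tendsto_integral_dirac {E : Type*} [NormedAddCommGroup E] [NormedSpace ℝ E]
    [CompleteSpace E] [TopologicalSpace X] {f : X → E} (hf : Continuous f) {ι : Type*}
    {l : Filter ι} {x : ι → X} {x₀ : X} (hx : Tendsto x l (𝓝 x₀)) :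
    Tendsto (fun n => ∫ y, f y ∂(Measure.dirac (x n))) l (𝓝 (∫ y, f y ∂(Measure.dirac x₀))) := by
  simp only [integral_dirac]
  exact (hf.tendsto x₀).comp hx

theorem iSup_abs_dirac_sub_dirac_of_ne {x y : X} (hxy : x ≠ y) :
    ⨆ C : {C : Set X // MeasurableSet C},
      |((Measure.dirac x) C.1).toReal - ((Measure.dirac y) C.1).toReal| = 1 := by
  classical
  refine ciSup_eq_of_forall_le_of_eq (fun C => ?_) ⟨{y}, measurableSet_singleton y⟩ ?_
  · simp only [Measure.dirac_apply, Set.indicator_apply, Pi.one_apply]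
    split_ifs <;> norm_num
  · simp [hxy]

theorem not_tendsto_iSup_abs_dirac_sub_dirac {x : ℕ → X} {y : X} (hxy : ∀ n, x n ≠ y) :
    ¬ Tendsto (fun n => ⨆ C : {C : Set X // MeasurableSet C},
      |((Measure.dirac (x n)) C.1).toReal - ((Measure.dirac y) C.1).toReal|) atTop (𝓝 0) := by
  simp only [iSup_abs_dirac_sub_dirac_of_ne (hxy _)]
  exact fun h => one_ne_zero (tendsto_nhds_unique tendsto_const_nhds h)

theorem setLIntegral_dirac_dirac {Y : Type*} [MeasurableSpace Y] [MeasurableSingletonClass Y]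
    (g : X → Y) (a : X) (B : Set X) (C : Set Y) :
    ∫⁻ x in B, (Measure.dirac (g x)) C ∂(Measure.dirac a) = Measure.dirac (a, g a) (B ×ˢ C) := by
  classical
  rw [setLIntegral_dirac, ← Measure.dirac_prod_dirac, Measure.prod_prod, Measure.dirac_apply a B]
  split_ifs with ha <;> simp [ha]

end Dirac

section SemiUniformFeller

variable {X Y : Type*} [MeasurableSpace X] [MeasurableSingletonClass X]
  [MeasurableSpace Y] [MeasurableSingletonClass Y]

theorem setIntegral_univ_prod_dirac {E : Type*} [NormedAddCommGroup E] [NormedSpace ℝ E]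
    [CompleteSpace E] (f : X → E) (a : X) (b : Y) (B : Set Y) [Decidable (b ∈ B)] :
    ∫ z in Set.univ ×ˢ B, f z.1 ∂(Measure.dirac (a, b)) = if b ∈ B then f a else 0 := by
  classical
  rw [setIntegral_dirac]
  by_cases hb : b ∈ B <;> simp [hb]

theorem iSup_abs_setIntegral_univ_prod_dirac_sub (f : X → ℝ) (a a' : X) (b : Y) :
    ⨆ B : {B : Set Y // MeasurableSet B},
      |(∫ z in Set.univ ×ˢ B.1, f z.1 ∂(Measure.dirac (a, b))) -
        ∫ z in Set.univ ×ˢ B.1, f z.1 ∂(Measure.dirac (a', b))| = |f a - f a'| := by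
  classical
  refine ciSup_eq_of_forall_le_of_eq (fun B => ?_) ⟨Set.univ, MeasurableSet.univ⟩ ?_
  · simp only [setIntegral_univ_prod_dirac]
    split_ifs <;> simp
  · simp

theorem semiUniformFeller_deterministic_prodMk_const {T : Type*} [TopologicalSpace X]
    [TopologicalSpace T] [MeasurableSpace T] {φ : T → X} (hφ : Continuous φ)
    (hφm : Measurable φ) (y₀ : Y) :
    SemiUniformFeller (Kernel.deterministic (fun t => (φ t, y₀)) (hφm.prodMk measurable_const)) := by
  intro s t hst f
  simp only [Kernel.deterministic_apply, iSup_abs_setIntegral_univ_prod_dirac_sub]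
  have hf : Tendsto (fun n => f (φ (s n))) atTop (𝓝 (f (φ t))) :=
    (f.continuous.comp hφ).continuousAt.tendsto.comp hst
  simpa using (hf.sub_const (f (φ t))).abs

end SemiUniformFeller

/-- Example: with `W = Y = A = ℝ`, `P₂(·|w,a) = δ_{w₊}` and `Q₂(·|w) = δ_{w₋}`, the kernels
`P₂` and `Q₂` are weakly continuous but not continuous in total variation at `w = 0`, the
kernel `P(B × C | w, a) = ∫_B Q₂(C | w') P₂(dw' | w, a)` equals `δ_{(w₊, 0)}`, and `P` is
semi-uniform Feller. -/
theorem semiUniformFeller_example_pomdp2 :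
    -- (1a) `P₂` is weakly continuous in `w`
    (∀ (w : ℕ → ℝ) (w₀ : ℝ), Tendsto w atTop (𝓝 w₀) → ∀ f : BoundedContinuousFunction ℝ ℝ,
      Tendsto (fun n => ∫ x, f x ∂(Measure.dirac (max (w n) 0))) atTop
        (𝓝 (∫ x, f x ∂(Measure.dirac (max w₀ 0))))) ∧
    -- (1b) `Q₂` is weakly continuous in `w`
    (∀ (w : ℕ → ℝ) (w₀ : ℝ), Tendsto w atTop (𝓝 w₀) → ∀ f : BoundedContinuousFunction ℝ ℝ,
      Tendsto (fun n => ∫ x, f x ∂(Measure.dirac (min (w n) 0))) atTop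
        (𝓝 (∫ x, f x ∂(Measure.dirac (min w₀ 0))))) ∧
    -- (1c) `P₂` is not continuous in total variation at `w = 0`
    ¬ (∀ (w : ℕ → ℝ), Tendsto w atTop (𝓝 0) →
      Tendsto (fun n => ⨆ C : {C : Set ℝ // MeasurableSet C},
        |((Measure.dirac (max (w n) 0)) C.1).toReal -
          ((Measure.dirac (max (0 : ℝ) 0)) C.1).toReal|) atTop (𝓝 0)) ∧
    -- (1d) `Q₂` is not continuous in total variation at `w = 0`
    ¬ (∀ (w : ℕ → ℝ), Tendsto w atTop (𝓝 0) →
      Tendsto (fun n => ⨆ C : {C : Set ℝ // MeasurableSet C},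
        |((Measure.dirac (min (w n) 0)) C.1).toReal -
          ((Measure.dirac (min (0 : ℝ) 0)) C.1).toReal|) atTop (𝓝 0)) ∧
    -- (2a) `P(B × C | w, a) = ∫_B Q₂(C | w') P₂(dw' | w, a)` equals `δ_{(w₊, 0)}(B × C)`,
    -- i.e. `1{w₊ ∈ B} · 1{0 ∈ C}`
    (∀ (w _a : ℝ) (B C : Set ℝ), MeasurableSet B → MeasurableSet C →
      (∫⁻ w' in B, (Measure.dirac (min w' 0)) C ∂(Measure.dirac (max w 0))) =
        (Measure.dirac ((max w 0, (0 : ℝ)))) (B ×ˢ C)) ∧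
    -- (2b) the kernel `P(·|w,a) = δ_{(w₊, 0)}` is semi-uniform Feller
    SemiUniformFeller (Kernel.deterministic (fun p : ℝ × ℝ => (max p.1 0, (0 : ℝ)))
      ((measurable_fst.max measurable_const).prodMk measurable_const)) := by
  have hinv : Tendsto (fun n : ℕ => 1 / ((n : ℝ) + 1)) atTop (𝓝 0) :=
    tendsto_one_div_add_atTop_nhds_zero_nat
  refine ⟨fun w w₀ hw f => tendsto_integral_dirac f.continuous (hw.max tendsto_const_nhds),
    fun w w₀ hw f => tendsto_integral_dirac f.continuous (hw.min tendsto_const_nhds), fun h => ?_,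
    fun h => ?_, fun w _ B C _ _ => ?_,
    semiUniformFeller_deterministic_prodMk_const (by fun_prop) (by fun_prop) 0⟩
  · refine not_tendsto_iSup_abs_dirac_sub_dirac (fun n => ?_) (h _ hinv)
    rw [max_self]
    exact (lt_max_of_lt_left (by positivity)).ne'
  · refine not_tendsto_iSup_abs_dirac_sub_dirac (fun n => ?_) (h _ (by simpa using hinv.neg))
    rw [min_self]
    exact (min_lt_of_left_lt (neg_neg_of_pos (by positivity))).ne
  · rw [setLIntegral_dirac_dirac, min_eq_right (le_max_right w 0)]
end
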